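/- arXiv:2501.13580 — 6 statements merged into one kernel-verified Lean document; each statement's English description precedes it below -/
import Mathlib

section
/- Let f : R → S be a flat homomorphism of commutative rings, and let ϖ ∈ R be an element contained in the Jacobson radical of R such that f(ϖ) is contained in the Jacobson radical of S. If the induced map Spec(S/ϖS) → Spec(R/ϖR) is surjective, then f is faithfully flat. -/
/-- Let `R → S` be a flat ring map and `ϖ ∈ R` lie in the Jacobson radical of `R`, with image
in the Jacobson radical of `S`.  If the induced map `Spec (S/ϖS) → Spec (R/ϖR)` is
surjective, then `R → S` is faithfully flat. -/
theorem stmt3 {R S : Type*} [CommRing R] [CommRing S] [Algebra R S]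
    [Module.Flat R S] (ϖ : R)
    (hϖR : ϖ ∈ (⊥ : Ideal R).jacobson)
    (hϖS : algebraMap R S ϖ ∈ (⊥ : Ideal S).jacobson)
    (hsurj : Function.Surjective
      (PrimeSpectrum.comap
        (Ideal.quotientMap (Ideal.span {algebraMap R S ϖ}) (algebraMap R S)
          (Ideal.span_le.mpr (Set.singleton_subset_iff.mpr (by
            rw [SetLike.mem_coe, Ideal.mem_comap]
            exact Ideal.mem_span_singleton_self _)))))) :
    Module.FaithfullyFlat R S := by
  rw [Module.faithfullyFlat_iff]
  refine ⟨inferInstance, fun m hm => ?_⟩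
  -- ϖ lies in every maximal ideal
  have hϖm : ϖ ∈ m := by
    have : (⊥ : Ideal R).jacobson ≤ m := sInf_le ⟨bot_le, hm⟩
    exact this hϖR
  set I : Ideal R := Ideal.span {ϖ} with hI
  set J : Ideal S := Ideal.span {algebraMap R S ϖ} with hJ
  have hIm : I ≤ m := Ideal.span_le.mpr (Set.singleton_subset_iff.mpr hϖm)
  -- image of m in R/ϖR is prime
  have hmprime : (m.map (Ideal.Quotient.mk I)).IsPrime := by
    refine Ideal.map_isPrime_of_surjective Ideal.Quotient.mk_surjective ?_
    rwa [Ideal.mk_ker]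
  obtain ⟨Qbar, hQ⟩ := hsurj ⟨m.map (Ideal.Quotient.mk I), hmprime⟩
  set Q : Ideal S := Qbar.asIdeal.comap (Ideal.Quotient.mk J) with hQdef
  have hQprime : Q.IsPrime := Ideal.IsPrime.comap _
  have hcomap : Q.comap (algebraMap R S) = m := by
    have h1 : (Qbar.asIdeal.comap
        (Ideal.quotientMap J (algebraMap R S)
          (Ideal.span_le.mpr (Set.singleton_subset_iff.mpr (by
            rw [SetLike.mem_coe, Ideal.mem_comap]
            exact Ideal.mem_span_singleton_self _))))) = m.map (Ideal.Quotient.mk I) :=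
      congrArg PrimeSpectrum.asIdeal hQ
    have h2 := Ideal.quotientMap_comp_mk (J := I) (I := J) (f := algebraMap R S)
      (Ideal.span_le.mpr (Set.singleton_subset_iff.mpr (by
        rw [SetLike.mem_coe, Ideal.mem_comap]
        exact Ideal.mem_span_singleton_self _)))
    calc Q.comap (algebraMap R S)
        = Qbar.asIdeal.comap ((Ideal.Quotient.mk J).comp (algebraMap R S)) := by
          rw [hQdef, Ideal.comap_comap]
      _ = Qbar.asIdeal.comap ((Ideal.quotientMap J (algebraMap R S) _).comp
            (Ideal.Quotient.mk I)) := by rw [h2]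
      _ = (Qbar.asIdeal.comap (Ideal.quotientMap J (algebraMap R S) _)).comap
            (Ideal.Quotient.mk I) := by rw [← Ideal.comap_comap]
      _ = (m.map (Ideal.Quotient.mk I)).comap (Ideal.Quotient.mk I) := by rw [h1]
      _ = m := Ideal.comap_map_mk hIm
  -- m • ⊤ corresponds to the extension of m in S
  have hle : m.map (algebraMap R S) ≤ Q := Ideal.map_le_of_le_comap hcomap.ge
  have hne : m.map (algebraMap R S) ≠ ⊤ := fun h => hQprime.ne_top (top_le_iff.mp (h ▸ hle))
  intro htop
  apply hne
  have := Ideal.smul_top_eq_map (R := R) (S := S) m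
  rw [htop] at this
  exact Ideal.eq_top_iff_one _ |>.mpr (by
    have : (1 : S) ∈ (m.map (algebraMap R S)).restrictScalars R := this ▸ trivial
    exact this)
end

section
/- Let R be a Noetherian integral domain and let φ : R → R be a ring endomorphism such that for some m ≥ 1 and some integer N ≥ 2, φ^m(x) = x^N for all x ∈ R. If I ⊆ R is an ideal satisfying I = R·φ(I) (the ideal generated by φ(I)), then I = 0 or I = R. -/
/-- Let `R` be a Noetherian integral domain and `φ : R → R` a ring endomorphism some iterate
of which is the `N`-th power map (`N ≥ 2`).  If an ideal `I` satisfies `I = R·φ(I)`, then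
`I = 0` or `I = R`. -/
theorem stmt4 {R : Type*} [CommRing R] [IsDomain R] [IsNoetherianRing R]
    (φ : R →+* R) (m N : ℕ) (hm : 1 ≤ m) (hN : 2 ≤ N)
    (hφ : ∀ x : R, (⇑φ)^[m] x = x ^ N)
    (I : Ideal R) (hI : Ideal.map φ I = I) :
    I = ⊥ ∨ I = ⊤ := by
  -- iterate: map (φ^m) I = I
  have hiter : ∀ k : ℕ, Ideal.map (φ ^ k) I = I := by
    intro k
    induction k with
    | zero => exact Ideal.map_id I
    | succ k ih =>
      have hc : φ ^ (k + 1) = (φ ^ k).comp φ := by rw [pow_succ]; rfl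
      rw [hc, ← Ideal.map_map, hI, ih]
  -- I ≤ I • I
  have hle : I ≤ I • I := by
    have h := hiter m
    conv_lhs => rw [← h]
    rw [Ideal.map_le_iff_le_comap]
    intro x hx
    have : (φ ^ m) x = x ^ N := hφ x
    simp only [Ideal.mem_comap, this]
    have : x ^ N ∈ I ^ N := Ideal.pow_mem_pow hx N
    have h2 : I ^ N ≤ I ^ 2 := Ideal.pow_le_pow_right hN
    have := h2 this
    rw [pow_two] at this
    simpa [Ideal.smul_eq_mul] using this
  obtain ⟨r, hrI, hr⟩ := Submodule.exists_mem_and_smul_eq_self_of_fg_of_le_smul I I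
    (IsNoetherian.noetherian I) hle
  by_cases hb : I = ⊥
  · exact Or.inl hb
  · right
    obtain ⟨x, hxI, hx0⟩ := Submodule.exists_mem_ne_zero_of_ne_bot hb
    have := hr x hxI
    have : (r - 1) * x = 0 := by
      rw [sub_mul, one_mul, sub_eq_zero]
      simpa [smul_eq_mul] using this
    rcases mul_eq_zero.mp this with h | h
    · have hr1 : r = 1 := sub_eq_zero.mp h
      exact Ideal.eq_top_of_isUnit_mem I hrI (hr1 ▸ isUnit_one)
    · exact absurd h hx0
end

section
/- Let R be a commutative ring, I an ideal of R contained in the Jacobson radical, and M a finitely generated projective R-module of constant rank r (i.e. M_𝔭 is free of rank r over R_𝔭 for every prime 𝔭). If M/IM is a free R/I-module of rank r, then M is a free R-module of rank r. -/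
/-!
Lift an `R/I`-basis of `M/IM` to a family `x` in `M`. By Nakayama's lemma `x` spans `M`, so
`Rʳ → M` is surjective. Localized at a maximal ideal it becomes a surjection between free modules
of the same finite rank, hence an isomorphism (a surjective endomorphism of a finite module is
injective), and injectivity is a local property.
-/

open Function

theorem Submodule.span_range_eq_top_of_span_range_mkQ_eq_top {R M ι : Type*} [CommRing R]
    [AddCommGroup M] [Module R M] [Module.Finite R M] {I : Ideal R}
    (hI : I ≤ (⊥ : Ideal R).jacobson) (x : ι → M)
    (hx : span R (Set.range ((I • ⊤ : Submodule R M).mkQ ∘ x)) = ⊤) :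
    span R (Set.range x) = ⊤ := by
  refine top_le_iff.mp (le_of_map_mkQ_le_map_mkQ_of_le_jacobson_bot Module.Finite.fg_top hI ?_)
  rw [map_span, ← Set.range_comp, hx]
  exact le_top

theorem LinearMap.injective_of_surjective_of_localizedModule_equiv {R M N : Type*}
    [CommRing R] [AddCommGroup M] [Module R M] [AddCommGroup N] [Module R N] [Module.Finite R M]
    (f : M →ₗ[R] N) (hf : Surjective f)
    (h : ∀ (P : Ideal R) [P.IsMaximal], Nonempty (LocalizedModule P.primeCompl N
      ≃ₗ[Localization.AtPrime P] LocalizedModule P.primeCompl M)) :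
    Injective f := by
  refine injective_of_localized_maximal f fun P _ => ?_
  obtain ⟨e⟩ := h P
  have hsurj : Surjective (e.toLinearMap ∘ₗ LocalizedModule.map P.primeCompl f) :=
    e.surjective.comp (LocalizedModule.map_surjective _ f hf)
  exact Injective.of_comp (f := e) (OrzechProperty.injective_of_surjective_endomorphism _ hsurj)

theorem stmt6_general {R M : Type*} [CommRing R] [AddCommGroup M] [Module R M]
    (I : Ideal R) (hI : I ≤ (⊥ : Ideal R).jacobson)
    [Module.Finite R M] (r : ℕ)
    (hrank : ∀ (𝔭 : Ideal R) [𝔭.IsPrime],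
      Nonempty (Module.Basis (Fin r) (Localization.AtPrime 𝔭) (LocalizedModule 𝔭.primeCompl M)))
    (hfree : Nonempty (Module.Basis (Fin r) (R ⧸ I) (M ⧸ (I • ⊤ : Submodule R M)))) :
    Nonempty (Module.Basis (Fin r) R M) := by
  obtain ⟨b⟩ := hfree
  choose x hx using fun i => (I • ⊤ : Submodule R M).mkQ_surjective (b i)
  have hspan : Submodule.span R (Set.range x) = ⊤ := by
    refine Submodule.span_range_eq_top_of_span_range_mkQ_eq_top hI x ?_
    rw [show _ ∘ x = b from funext hx, ← Submodule.restrictScalars_span R (R ⧸ I)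
      Ideal.Quotient.mk_surjective, b.span_eq, Submodule.restrictScalars_top]
  set f := Fintype.linearCombination R x
  have hsurj : Surjective f := by
    rw [← LinearMap.range_eq_top, Fintype.range_linearCombination, hspan]
  have hinj : Injective f := by
    refine f.injective_of_surjective_of_localizedModule_equiv hsurj fun P _ => ?_
    obtain ⟨bP⟩ := hrank P
    exact ⟨bP.equiv ((Pi.basisFun R (Fin r)).ofIsLocalizedModule (Localization.AtPrime P)
      P.primeCompl (LocalizedModule.mkLinearMap _ _)) (Equiv.refl _)⟩
  exact ⟨(Pi.basisFun R (Fin r)).map (LinearEquiv.ofBijective f ⟨hinj, hsurj⟩)⟩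

/-- Let `R` be a commutative ring, `I` an ideal contained in the Jacobson radical, and `M` a
finitely generated projective `R`-module of constant rank `r` (its localization at every
prime is free of rank `r`).  If `M/IM` is free of rank `r` over `R/I`, then `M` is free of
rank `r` over `R`. -/
theorem stmt6 {R M : Type*} [CommRing R] [AddCommGroup M] [Module R M]
    (I : Ideal R) (hI : I ≤ (⊥ : Ideal R).jacobson)
    [Module.Finite R M] [Module.Projective R M] (r : ℕ)
    (hrank : ∀ (𝔭 : Ideal R) [𝔭.IsPrime],
      Nonempty (Module.Basis (Fin r) (Localization.AtPrime 𝔭) (LocalizedModule 𝔭.primeCompl M)))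
    (hfree : Nonempty (Module.Basis (Fin r) (R ⧸ I) (M ⧸ (I • ⊤ : Submodule R M)))) :
    Nonempty (Module.Basis (Fin r) R M) :=
  stmt6_general I hI r hrank hfree
end

section
/- Let R be a commutative ring, I an ideal of R, and F a free R-module. Then ⋂_{n≥1} (IⁿF) = (⋂_{n≥1} Iⁿ)·F. In particular, if R is a Noetherian integral domain and I is a proper ideal, then ⋂_{n≥1} IⁿF = 0. -/
open Submodule

lemma mem_smul_top_iff_repr {R F : Type*} [CommRing R] [AddCommGroup F] [Module R F]
    {ι : Type*} (b : Module.Basis ι R F) (J : Ideal R) (x : F) :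
    x ∈ J • (⊤ : Submodule R F) ↔ ∀ i, b.repr x i ∈ J := by
  have htop : (⊤ : Submodule R F) = Submodule.span R (Set.range b) := b.span_eq.symm
  rw [htop, Submodule.mem_ideal_smul_span_iff_exists_sum]
  constructor
  · rintro ⟨a, ha, rfl⟩ i
    have : (a.sum fun i c => c • b i) = Finsupp.linearCombination R b a := rfl
    rw [this, b.repr_linearCombination]
    exact ha i
  · intro h
    refine ⟨b.repr x, h, ?_⟩
    exact b.linearCombination_repr x

/-- For a free module `F` over a commutative ring `R` and an ideal `I`,
`⋂_{n ≥ 1} IⁿF = (⋂_{n ≥ 1} Iⁿ)·F`; in particular, if `R` is a Noetherian domain and `I` is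
proper, then `⋂_{n ≥ 1} IⁿF = 0`. -/
theorem stmt13 {R F : Type*} [CommRing R] [AddCommGroup F] [Module R F]
    [Module.Free R F] (I : Ideal R) :
    (⨅ n : ℕ, (I ^ (n + 1)) • (⊤ : Submodule R F)) =
        (⨅ n : ℕ, I ^ (n + 1)) • (⊤ : Submodule R F) ∧
      (∀ (_ : IsNoetherianRing R) (_ : IsDomain R), I ≠ ⊤ →
        (⨅ n : ℕ, (I ^ (n + 1)) • (⊤ : Submodule R F)) = ⊥) := by
  obtain ⟨ι, b⟩ := Module.Free.exists_basis (R := R) (M := F)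
  have main : (⨅ n : ℕ, (I ^ (n + 1)) • (⊤ : Submodule R F)) =
      (⨅ n : ℕ, I ^ (n + 1)) • (⊤ : Submodule R F) := by
    apply le_antisymm
    · intro x hx
      rw [mem_smul_top_iff_repr b]
      intro i
      rw [Submodule.mem_iInf]
      intro n
      have := (Submodule.mem_iInf _).mp hx n
      exact (mem_smul_top_iff_repr b _ _).mp this i
    · exact le_iInf fun n =>
        Submodule.smul_mono_left (iInf_le (fun n => I ^ (n + 1)) n)
  refine ⟨main, fun hN hD hI => ?_⟩
  rw [main]
  have hbot : (⨅ n : ℕ, I ^ (n + 1)) = ⊥ := by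
    rw [← le_bot_iff, ← Ideal.iInf_pow_eq_bot_of_isDomain I hI]
    exact le_iInf fun n => (iInf_le (fun n => I ^ (n + 1)) n).trans
      (Ideal.pow_le_pow_right (Nat.le_succ n))
  rw [hbot, Submodule.bot_smul]
end

section
/- Let R be a commutative ring with a ring endomorphism φ. Let M and N be R-modules equipped with φ-semilinear endomorphisms φ_M, φ_N, and assume that the linearization R ⊗_{φ,R} M → M is surjective (i.e. M is generated by r·φ_M(m) for r ∈ R, m ∈ M). Let h : M → N be an R-linear map with h ∘ φ_M = φ_N ∘ h, and let J ⊆ R be an ideal with h(M) ⊆ J·N. Then for every n ≥ 1, h(M) ⊆ (R·φⁿ(J))·N, where R·φⁿ(J) denotes the ideal generated by φⁿ(J). -/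
/-- The `n`-th iterate of a ring endomorphism, as a ring homomorphism. -/
def iterateHom {R : Type*} [CommRing R] (φ : R →+* R) : ℕ → (R →+* R)
  | 0 => RingHom.id R
  | n + 1 => (iterateHom φ n).comp φ

lemma iterateHom_comm {R : Type*} [CommRing R] (φ : R →+* R) (n : ℕ) :
    (iterateHom φ n).comp φ = φ.comp (iterateHom φ n) := by
  induction n with
  | zero => simp [iterateHom]
  | succ n ih =>
    show ((iterateHom φ n).comp φ).comp φ = _
    rw [ih, RingHom.comp_assoc]
    show _ = φ.comp ((iterateHom φ n).comp φ)
    rw [ih]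

lemma step14 {R M N : Type*} [CommRing R] (φ : R →+* R)
    [AddCommGroup M] [Module R M] [AddCommGroup N] [Module R N]
    (f : M →ₛₗ[φ] M) (g : N →ₛₗ[φ] N)
    (hgen : Submodule.span R (Set.range f) = ⊤)
    (h : M →ₗ[R] N) (hcomm : ∀ m : M, h (f m) = g (h m))
    (I : Ideal R) (hI : LinearMap.range h ≤ I • (⊤ : Submodule R N)) :
    LinearMap.range h ≤ (I.map φ) • (⊤ : Submodule R N) := by
  have hg : ∀ x ∈ I • (⊤ : Submodule R N), g x ∈ (I.map φ) • (⊤ : Submodule R N) := by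
    intro x hx
    refine Submodule.smul_induction_on hx ?_ ?_
    · intro r hr n _
      rw [LinearMap.map_smulₛₗ]
      exact Submodule.smul_mem_smul (Ideal.mem_map_of_mem φ hr) Submodule.mem_top
    · intro x y hx hy
      rw [map_add]; exact Submodule.add_mem _ hx hy
  rintro _ ⟨m, rfl⟩
  have hm : m ∈ Submodule.span R (Set.range f) := hgen ▸ Submodule.mem_top
  have key : Submodule.span R (Set.range f) ≤
      Submodule.comap h ((I.map φ) • (⊤ : Submodule R N)) := by
    rw [Submodule.span_le]
    rintro _ ⟨m', rfl⟩
    simp only [Set.mem_preimage, SetLike.mem_coe, Submodule.mem_comap, hcomm]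
    exact hg _ (hI ⟨m', rfl⟩)
  exact key hm

/-- Let `M`, `N` carry `φ`-semilinear endomorphisms `f`, `g`, with `M` generated by the image
of `f`.  If `h : M → N` is `R`-linear, equivariant, and `h(M) ⊆ J·N` for an ideal `J`, then
`h(M) ⊆ (R·φⁿ(J))·N` for every `n ≥ 1`. -/
theorem stmt14 {R M N : Type*} [CommRing R] (φ : R →+* R)
    [AddCommGroup M] [Module R M] [AddCommGroup N] [Module R N]
    (f : M →ₛₗ[φ] M) (g : N →ₛₗ[φ] N)
    (hgen : Submodule.span R (Set.range f) = ⊤)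
    (h : M →ₗ[R] N) (hcomm : ∀ m : M, h (f m) = g (h m))
    (J : Ideal R) (hJ : LinearMap.range h ≤ J • (⊤ : Submodule R N)) :
    ∀ n : ℕ, 1 ≤ n →
      LinearMap.range h ≤ (J.map (iterateHom φ n)) • (⊤ : Submodule R N) := by
  intro n hn
  induction n, hn using Nat.le_induction with
  | base =>
    have : iterateHom φ 1 = φ := by
      show (RingHom.id R).comp φ = φ
      exact RingHom.id_comp φ
    rw [this]
    exact step14 φ f g hgen h hcomm J hJ
  | succ n hn ih =>
    have : J.map (iterateHom φ (n + 1)) = (J.map (iterateHom φ n)).map φ := by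
      show J.map ((iterateHom φ n).comp φ) = _
      rw [iterateHom_comm, ← Ideal.map_map]
    rw [this]
    exact step14 φ f g hgen h hcomm _ ih
end

section
/- Let G be a group and M a G-module (an abelian group with G-action by automorphisms). Let ϖ : M → M be an injective G-equivariant additive endomorphism such that the canonical map M → lim_n M/ϖⁿM is an isomorphism (M is ϖ-adically complete and separated). Fix k ≥ 1 and suppose the group cohomology Hᵏ(G, M/ϖM) vanishes. Then multiplication by ϖ is surjective on Hᵏ(G, M), and moreover Hᵏ(G, M) = 0. -/
open CategoryTheory CategoryTheory.Limits

namespace Stmt16Aux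

open groupCohomology

/-- The inhomogeneous cochain differential, typed with values in `A.V`. -/
noncomputable def D {G : Type} [Group G] (A : Rep ℤ G) (n : ℕ)
    (f : (Fin n → G) → A.V) : (Fin (n+1) → G) → A.V :=
  fun g => inhomogeneousCochains.d A n f g

lemma D_add {G : Type} [Group G] (A : Rep ℤ G) (n : ℕ) (f₁ f₂ : (Fin n → G) → A.V) :
    D A n (f₁ + f₂) = D A n f₁ + D A n f₂ := by
  funext g
  exact congrFun (map_add (inhomogeneousCochains.d A n).hom f₁ f₂) g

lemma D_sub {G : Type} [Group G] (A : Rep ℤ G) (n : ℕ) (f₁ f₂ : (Fin n → G) → A.V) :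
    D A n (f₁ - f₂) = D A n f₁ - D A n f₂ := by
  funext g
  exact congrFun (map_sub (inhomogeneousCochains.d A n).hom f₁ f₂) g

lemma D_zero {G : Type} [Group G] (A : Rep ℤ G) (n : ℕ) :
    D A n 0 = 0 := by
  funext g
  exact congrFun (map_zero (inhomogeneousCochains.d A n).hom) g

lemma mapd0 {G : Type} [Group G] {A B : Rep ℤ G} (φ : A ⟶ B) (n : ℕ)
    (f : (Fin n → G) → A.V) (g : Fin (n+1) → G) :
    inhomogeneousCochains.d B n (fun x => φ.hom (f x)) g
      = φ.hom (inhomogeneousCochains.d A n f g) := by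
  simp only [inhomogeneousCochains.d_hom_apply, map_add, map_sum, Rep.hom_comm_apply, map_smulₛₗ,
    RingHom.id_apply]

lemma mapd {G : Type} [Group G] {A B : Rep ℤ G} (φ : A ⟶ B) (n : ℕ)
    (f : (Fin n → G) → A.V) (g : Fin (n+1) → G) :
    D B n (fun x => φ.hom (f x)) g = φ.hom (D A n f g) :=
  mapd0 φ n f g

lemma mapd_iter {G : Type} [Group G] {M : Rep ℤ G} (ϖ : M ⟶ M) (m n : ℕ)
    (f : (Fin n → G) → M.V) (g : Fin (n+1) → G) :
    D M n (fun x => (⇑ϖ.hom)^[m] (f x)) g = (⇑ϖ.hom)^[m] (D M n f g) := by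
  induction m generalizing f with
  | zero => simp
  | succ m ih =>
      have h1 : (fun x => (⇑ϖ.hom)^[m+1] (f x)) = fun x => (⇑ϖ.hom)^[m] (ϖ.hom (f x)) := by
        funext x; rw [Function.iterate_succ_apply]
      rw [h1, ih (fun x => ϖ.hom (f x)), mapd ϖ n f g, ← Function.iterate_succ_apply]

lemma dd_zero {G : Type} [Group G] (M : Rep.{0} ℤ G) (n : ℕ) (b : (Fin n → G) → M.V) :
    D M (n+1) (D M n b) = 0 := by
  have h := (inhomogeneousCochains M).d_comp_d n (n+1) (n+2)
  rw [inhomogeneousCochains.d_def, inhomogeneousCochains.d_def] at h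
  have h2 := ConcreteCategory.congr_hom h b
  funext g
  have h3 := congrFun h2 g
  simp at h3
  exact h3

lemma iter_sub {G : Type} [Group G] {M : Rep ℤ G} (ϖ : M ⟶ M) (n : ℕ) (x y : M.V) :
    (⇑ϖ.hom)^[n] (x - y) = (⇑ϖ.hom)^[n] x - (⇑ϖ.hom)^[n] y := by
  induction n generalizing x y with
  | zero => simp
  | succ n ih => simp only [Function.iterate_succ_apply, map_sub, ih]

lemma iter_add {G : Type} [Group G] {M : Rep ℤ G} (ϖ : M ⟶ M) (n : ℕ) (x y : M.V) :
    (⇑ϖ.hom)^[n] (x + y) = (⇑ϖ.hom)^[n] x + (⇑ϖ.hom)^[n] y := by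
  induction n generalizing x y with
  | zero => simp
  | succ n ih => simp only [Function.iterate_succ_apply, map_add, ih]

/-- From vanishing cohomology: every cocycle is a coboundary. -/
lemma exact_of_isZero {G : Type} [Group G] (Q : Rep ℤ G) (j : ℕ)
    (hvanish : IsZero (groupCohomology Q (j+1))) :
    ∀ cbar : (Fin (j+1) → G) → Q.V, D Q (j+1) cbar = 0 →
      ∃ bbar : (Fin j → G) → Q.V, D Q j bbar = cbar := by
  have h1 : (inhomogeneousCochains Q).ExactAt (j+1) := by
    rw [HomologicalComplex.exactAt_iff_isZero_homology]
    exact hvanish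
  rw [HomologicalComplex.exactAt_iff' _ j (j+1) (j+1+1)
    (CochainComplex.prev_nat_succ j) (CochainComplex.next ℕ (j+1))] at h1
  rw [ShortComplex.moduleCat_exact_iff] at h1
  intro cbar hc
  obtain ⟨b, hb⟩ := h1 cbar (by
    show ((inhomogeneousCochains Q).d (j+1) (j+1+1)) cbar = 0
    rw [inhomogeneousCochains.d_def]
    exact hc)
  refine ⟨b, ?_⟩
  rw [← hb]
  show _ = ((inhomogeneousCochains Q).d j (j+1)) b
  rw [inhomogeneousCochains.d_def]
  rfl

lemma isZero_of_exact {G : Type} [Group G] (M : Rep ℤ G) (j : ℕ)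
    (hex : ∀ c : (Fin (j+1) → G) → M.V, D M (j+1) c = 0 →
      ∃ b : (Fin j → G) → M.V, D M j b = c) :
    IsZero (groupCohomology M (j+1)) := by
  have h1 : (inhomogeneousCochains M).ExactAt (j+1) := by
    rw [HomologicalComplex.exactAt_iff' _ j (j+1) (j+1+1)
      (CochainComplex.prev_nat_succ j) (CochainComplex.next ℕ (j+1))]
    rw [ShortComplex.moduleCat_exact_iff]
    intro c hc
    obtain ⟨b, hb⟩ := hex c (by
      have h2 : ((inhomogeneousCochains M).d (j+1) (j+1+1)) c = 0 := hc
      rwa [inhomogeneousCochains.d_def] at h2)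
    refine ⟨b, ?_⟩
    show ((inhomogeneousCochains M).d j (j+1)) b = c
    rw [inhomogeneousCochains.d_def]
    exact hb
  rw [HomologicalComplex.exactAt_iff_isZero_homology] at h1
  exact h1

end Stmt16Aux

open Stmt16Aux groupCohomology

/-- Let `G` be a group and `M` a `G`-module, with an injective `G`-equivariant additive
endomorphism `ϖ` such that `M` is `ϖ`-adically complete and separated.  If
`Hᵏ(G, M/ϖM) = 0` (for a fixed `k ≥ 1`), then multiplication by `ϖ` is surjective on
`Hᵏ(G, M)`, and moreover `Hᵏ(G, M) = 0`. -/
theorem stmt16 {G : Type} [Group G] (M : Rep ℤ G) (ϖ : M ⟶ M)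
    (hinj : Function.Injective ϖ.hom)
    (hsep : ∀ x : M.V, (∀ n : ℕ, ∃ y : M.V, (⇑ϖ.hom)^[n] y = x) → x = 0)
    (hcomplete : ∀ a : ℕ → M.V,
      (∀ n : ℕ, ∃ y : M.V, a (n + 1) - a n = (⇑ϖ.hom)^[n] y) →
        ∃ x : M.V, ∀ n : ℕ, ∃ y : M.V, x - a n = (⇑ϖ.hom)^[n] y)
    (k : ℕ) (hk : 1 ≤ k)
    (hvanish : IsZero (groupCohomology (cokernel ϖ) k)) :
    (∀ τ : groupCohomology.inhomogeneousCochains M ⟶ groupCohomology.inhomogeneousCochains M,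
        (∀ (n : ℕ) (c : (Fin n → G) → M), τ.f n c = fun g => ϖ.hom (c g)) →
          Function.Surjective (HomologicalComplex.homologyMap τ k)) ∧
      IsZero (groupCohomology M k) := by
  obtain ⟨j, rfl⟩ : ∃ j : ℕ, k = j + 1 := ⟨k - 1, by omega⟩
  -- concrete description of the cokernel
  have hp_surj : Function.Surjective (cokernel.π ϖ).hom := by
    have : Epi (cokernel.π ϖ) := inferInstance
    rwa [Rep.epi_iff_surjective] at this
  have hp_exact : ∀ m : M.V, (cokernel.π ϖ).hom m = 0 → ∃ y, ϖ.hom y = m := by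
    have hS : (ShortComplex.mk ϖ (cokernel.π ϖ) (cokernel.condition ϖ)).Exact :=
      ShortComplex.exact_of_g_is_cokernel _ (cokernelIsCokernel ϖ)
    have hS' := hS.map (Rep.RepToAction ℤ G ⋙ Action.forget (ModuleCat ℤ) G)
    rw [ShortComplex.moduleCat_exact_iff] at hS'
    exact fun m hm => hS' m hm
  -- coboundary property in the quotient
  have hQ := exact_of_isZero (cokernel ϖ) j hvanish
  -- key dévissage step
  have step : ∀ c : (Fin (j+1) → G) → M.V, D M (j+1) c = 0 →
      ∃ (b : (Fin j → G) → M.V) (c₁ : (Fin (j+1) → G) → M.V),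
        D M (j+1) c₁ = 0 ∧ ∀ g, c g = D M j b g + ϖ.hom (c₁ g) := by
    intro c hc
    have hcbar : D (cokernel ϖ) (j+1) (fun g => (cokernel.π ϖ).hom (c g)) = 0 := by
      funext g
      rw [mapd]
      have h0 : D M (j+1) c g = 0 := by rw [hc]; rfl
      rw [h0]
      simp
    obtain ⟨bbar, hbbar⟩ := hQ _ hcbar
    choose b hb using fun g => hp_surj (bbar g)
    have hker : ∀ g, (cokernel.π ϖ).hom (c g - D M j b g) = 0 := by
      intro g
      have h1 : D (cokernel ϖ) j (fun x => (cokernel.π ϖ).hom (b x)) g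
          = (cokernel.π ϖ).hom (D M j b g) := mapd _ _ _ _
      have h2 : (fun x => (cokernel.π ϖ).hom (b x)) = bbar := funext hb
      rw [map_sub, ← h1, h2, hbbar]
      simp
    choose c₁ hc₁ using fun g => hp_exact _ (hker g)
    refine ⟨b, c₁, ?_, fun g => by rw [hc₁ g]; abel⟩
    -- c₁ is a cocycle
    have hfc : (fun g => ϖ.hom (c₁ g)) = fun g => c g - D M j b g :=
      funext fun g => hc₁ g
    have hd : D M (j+1) (fun g => ϖ.hom (c₁ g)) = 0 := by
      rw [hfc]
      have h3 : (fun g => c g - D M j b g) = c - D M j b := rfl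
      rw [h3, D_sub, hc, dd_zero, sub_zero]
    funext g
    apply hinj
    have h4 := congrFun hd g
    rw [mapd ϖ (j+1) c₁ g] at h4
    simpa using h4
  -- iterate the step
  have main : ∀ c : (Fin (j+1) → G) → M.V, D M (j+1) c = 0 →
      ∃ b : (Fin j → G) → M.V, D M j b = c := by
    intro c hc
    have step' : ∀ s : {c : (Fin (j+1) → G) → M.V // D M (j+1) c = 0},
        ∃ (b : (Fin j → G) → M.V)
          (c₁ : {c : (Fin (j+1) → G) → M.V // D M (j+1) c = 0}),
          ∀ g, s.1 g = D M j b g + ϖ.hom (c₁.1 g) := by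
      intro s
      obtain ⟨b, c₁, h1, h2⟩ := step s.1 s.2
      exact ⟨b, ⟨c₁, h1⟩, h2⟩
    choose fb fc hf using step'
    set cs : ℕ → {c : (Fin (j+1) → G) → M.V // D M (j+1) c = 0} :=
      fun n => fc^[n] ⟨c, hc⟩ with hcs_def
    have hcs : ∀ n g, (cs n).1 g = D M j (fb (cs n)) g + ϖ.hom ((cs (n+1)).1 g) := by
      intro n g
      have h1 : cs (n+1) = fc (cs n) := Function.iterate_succ_apply' fc n _
      rw [h1]
      exact hf (cs n) g
    set bs : ℕ → (Fin j → G) → M.V := fun n => fb (cs n) with hbs_def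
    set a : ℕ → (Fin j → G) → M.V :=
      fun n g => ∑ i ∈ Finset.range n, (⇑ϖ.hom)^[i] (bs i g) with ha_def
    have key : ∀ n g, c g = D M j (a n) g + (⇑ϖ.hom)^[n] ((cs n).1 g) := by
      intro n
      induction n with
      | zero =>
          intro g
          have h0 : a 0 = 0 := by funext g; simp [ha_def]
          rw [h0, D_zero]
          simp [hcs_def]
      | succ n ih =>
          intro g
          have han : a (n+1) = a n + fun g => (⇑ϖ.hom)^[n] (bs n g) := by
            funext g; simp [ha_def, Finset.sum_range_succ]
          rw [han, D_add, ih g, hcs n]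
          have h1 : (⇑ϖ.hom)^[n] (D M j (bs n) g + ϖ.hom ((cs (n+1)).1 g))
              = (⇑ϖ.hom)^[n] (D M j (bs n) g) + (⇑ϖ.hom)^[n+1] ((cs (n+1)).1 g) := by
            rw [iter_add, Function.iterate_succ_apply]
          rw [h1, ← mapd_iter ϖ n j (bs n) g]
          rw [Pi.add_apply]
          abel
    have hdiff : ∀ (g : Fin j → G) (n : ℕ),
        a (n+1) g - a n g = (⇑ϖ.hom)^[n] (bs n g) := by
      intro g n; simp [ha_def, Finset.sum_range_succ]
    choose x hx using fun g => hcomplete (fun n => a n g) (fun n => ⟨bs n g, hdiff g n⟩)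
    refine ⟨x, ?_⟩
    funext gg
    rw [← sub_eq_zero]
    apply hsep
    intro n
    choose y hy using fun g => hx g n
    refine ⟨D M j y gg - (cs n).1 gg, ?_⟩
    have h1 : (fun g => x g - a n g) = fun g => (⇑ϖ.hom)^[n] (y g) := funext hy
    have h2 : D M j (fun g => x g - a n g) gg = (⇑ϖ.hom)^[n] (D M j y gg) := by
      rw [h1, mapd_iter]
    have h3 : (fun g => x g - a n g) = x - a n := rfl
    rw [h3, D_sub] at h2
    have h4 := key n gg
    rw [iter_sub, ← h2]
    show D M j x gg - D M j (a n) gg - (⇑ϖ.hom)^[n] ((cs n).1 gg) = D M j x gg - c gg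
    rw [h4]
    abel
  have part2 : IsZero (groupCohomology M (j+1)) := isZero_of_exact M j main
  refine ⟨?_, part2⟩
  intro τ hτ y
  refine ⟨0, ?_⟩
  have hzero : ∀ z : groupCohomology M (j+1), z = 0 := by
    intro z
    have h1 : (𝟙 (groupCohomology M (j+1))) = 0 := part2.eq_of_src _ _
    calc z = (𝟙 (groupCohomology M (j+1))) z := rfl
    _ = (0 : groupCohomology M (j+1) ⟶ groupCohomology M (j+1)) z := by rw [h1]
    _ = 0 := rfl
  rw [map_zero]
  exact (hzero y).symm
end
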